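/- arXiv:2404.18778 — 3 statements merged into one kernel-verified Lean document; each statement's English description precedes it below -/
import Mathlib

section
/- Let (Σ, d) be a finite metric space and let P and Q be Markov transition matrices on Σ with stationary distributions μ and ν respectively. Suppose P is contracting with rate κ ∈ [0,1): for all σ, τ ∈ Σ there exists a coupling of P(σ,·) and P(τ,·) whose expected distance is at most κ·d(σ,τ). Let X ∼ μ and Y ∼ ν. Then for every function h : Σ → ℝ and every family (γ_σ)_{σ∈Σ} such that γ_σ is a coupling of P(σ,·) and Q(σ,·), one has |E h(X) − E h(Y)| ≤ (L_d(h)/(1−κ)) · ∑_{σ∈Σ} ν(σ) · ∫ d(w,z) dγ_σ(w,z), where L_d(h) is the least constant L such that |h(σ) − h(τ)| ≤ L·d(σ,τ) for all σ, τ ∈ Σ. (Taking the infimum over the couplings γ_σ, this is the bound |E h(X) − E h(Y)| ≤ (L_d(h)/(1−κ))·E[d_W(P(Y,·), Q(Y,·))] in terms of the Wasserstein distance d_W.) -/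
/-!
Let `W` be the Wasserstein distance between `μ` and `ν` and `L = lipConst h`; testing `h`
against an optimal coupling gives `|E h(X) - E h(Y)| ≤ L W`. To bound `W`, glue a contracting
coupling of `P σ, P τ` with `γ τ`: this couples `P σ` with `Q τ` at cost at most
`κ d(σ, τ) + cost (γ τ)`. Mixing these couplings with the weights of any coupling `ξ` of `μ` and
`ν` gives, by stationarity, a new coupling of `μ` and `ν` of cost at most `κ cost ξ + C`, where
`C = ∑ τ, ν τ cost (γ τ)`. Hence `W ≤ κ W + C`, that is `W ≤ C / (1 - κ)`.
-/

noncomputable section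

open Finset

variable {Ω : Type*} [Fintype Ω] [MetricSpace Ω]

/-- A probability measure on the finite set `Ω`. -/
def IsProbMeasure (μ : Ω → ℝ) : Prop := (∀ x, 0 ≤ μ x) ∧ ∑ x, μ x = 1

/-- A Markov transition matrix on the finite set `Ω`. -/
def IsKernel (K : Ω → Ω → ℝ) : Prop := (∀ x y, 0 ≤ K x y) ∧ ∀ x, ∑ y, K x y = 1

/-- `π` is stationary for the transition matrix `K`, i.e. `πK = π`. -/
def IsStationaryDist (K : Ω → Ω → ℝ) (π : Ω → ℝ) : Prop := ∀ y, ∑ x, π x * K x y = π y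

/-- `γ` is a coupling of `μ₁` and `μ₂`. -/
def IsCoupling (γ : Ω × Ω → ℝ) (μ₁ μ₂ : Ω → ℝ) : Prop :=
  (∀ p, 0 ≤ γ p) ∧ (∀ a, ∑ b, γ (a, b) = μ₁ a) ∧ (∀ b, ∑ a, γ (a, b) = μ₂ b)

/-- The least Lipschitz constant of `h` with respect to the metric `d`. -/
def lipConst (h : Ω → ℝ) : ℝ :=
  sInf {L : ℝ | ∀ σ τ : Ω, |h σ - h τ| ≤ L * dist σ τ}

end

noncomputable section

section Coupling

variable {Ω : Type*} [Fintype Ω]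

theorem IsCoupling.sum_mul_fst {ξ : Ω × Ω → ℝ} {μ₁ μ₂ : Ω → ℝ} (hξ : IsCoupling ξ μ₁ μ₂)
    (f : Ω → ℝ) : ∑ p, ξ p * f p.1 = ∑ x, μ₁ x * f x := by
  simp only [Fintype.sum_prod_type, ← Finset.sum_mul, hξ.2.1]

theorem IsCoupling.sum_mul_snd {ξ : Ω × Ω → ℝ} {μ₁ μ₂ : Ω → ℝ} (hξ : IsCoupling ξ μ₁ μ₂)
    (f : Ω → ℝ) : ∑ p, ξ p * f p.2 = ∑ y, μ₂ y * f y := by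
  simp only [Fintype.sum_prod_type_right, ← Finset.sum_mul, hξ.2.2]

theorem IsCoupling.apply_mul_div_snd {ξ : Ω × Ω → ℝ} {μ₁ μ₂ : Ω → ℝ}
    (hξ : IsCoupling ξ μ₁ μ₂) (x y : Ω) : ξ (x, y) * μ₂ y / μ₂ y = ξ (x, y) := by
  rcases eq_or_ne (μ₂ y) 0 with hy | hy
  · have hsum : ∑ x, ξ (x, y) = 0 := (hξ.2.2 y).trans hy
    simp [(Finset.sum_eq_zero_iff_of_nonneg fun x _ => hξ.1 (x, y)).mp hsum x (Finset.mem_univ x)]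
  · exact mul_div_cancel_right₀ _ hy

theorem IsCoupling.fst_mul_apply_div_fst {ξ : Ω × Ω → ℝ} {μ₁ μ₂ : Ω → ℝ}
    (hξ : IsCoupling ξ μ₁ μ₂) (x y : Ω) : μ₁ x * ξ (x, y) / μ₁ x = ξ (x, y) := by
  rcases eq_or_ne (μ₁ x) 0 with hx | hx
  · have hsum : ∑ y, ξ (x, y) = 0 := (hξ.2.1 x).trans hx
    simp [(Finset.sum_eq_zero_iff_of_nonneg fun y _ => hξ.1 (x, y)).mp hsum y (Finset.mem_univ y)]
  · exact mul_div_cancel_left₀ _ hx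

/-- Gluing couplings of `(a, b)` and `(b, c)` along `b`. Where `b y = 0` the division returns `0`,
which is harmless since then `α (x, y) = 0`. -/
def glue (b : Ω → ℝ) (α β : Ω × Ω → ℝ) : Ω × Ω → ℝ :=
  fun p => ∑ y, α (p.1, y) * β (y, p.2) / b y

section Glue

variable {a b c : Ω → ℝ} {α β : Ω × Ω → ℝ}

theorem sum_snd_glue_summand (hα : IsCoupling α a b) (hβ : IsCoupling β b c) (x y : Ω) :
    ∑ z, α (x, y) * β (y, z) / b y = α (x, y) := by
  rw [← Finset.sum_div, ← Finset.mul_sum, hβ.2.1 y, hα.apply_mul_div_snd]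

theorem sum_fst_glue_summand (hα : IsCoupling α a b) (hβ : IsCoupling β b c) (y z : Ω) :
    ∑ x, α (x, y) * β (y, z) / b y = β (y, z) := by
  rw [← Finset.sum_div, ← Finset.sum_mul, hα.2.2 y, hβ.fst_mul_apply_div_fst]

theorem IsCoupling.glue (hα : IsCoupling α a b) (hβ : IsCoupling β b c) :
    IsCoupling (glue b α β) a c := by
  have hb : ∀ y, 0 ≤ b y := fun y => hβ.2.1 y ▸ Finset.sum_nonneg fun z _ => hβ.1 (y, z)
  refine ⟨fun p => Finset.sum_nonneg fun y _ => ?_, fun x => ?_, fun z => ?_⟩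
  · exact div_nonneg (mul_nonneg (hα.1 _) (hβ.1 _)) (hb y)
  · simp only [_root_.glue]
    rw [Finset.sum_comm, ← hα.2.1 x]
    exact Finset.sum_congr rfl fun y _ => sum_snd_glue_summand hα hβ x y
  · simp only [_root_.glue]
    rw [Finset.sum_comm, ← hβ.2.2 z]
    exact Finset.sum_congr rfl fun y _ => sum_fst_glue_summand hα hβ y z

end Glue

def mix (ξ : Ω × Ω → ℝ) (Γ : Ω × Ω → Ω × Ω → ℝ) : Ω × Ω → ℝ :=
  fun p => ∑ q, ξ q * Γ q p

theorem IsCoupling.mix {P Q : Ω → Ω → ℝ} {μ ν : Ω → ℝ} {ξ : Ω × Ω → ℝ}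
    {Γ : Ω × Ω → Ω × Ω → ℝ} (hξ : IsCoupling ξ μ ν) (hμ : IsStationaryDist P μ)
    (hν : IsStationaryDist Q ν) (hΓ : ∀ q, IsCoupling (Γ q) (P q.1) (Q q.2)) :
    IsCoupling (mix ξ Γ) μ ν := by
  refine ⟨fun p => Finset.sum_nonneg fun q _ => mul_nonneg (hξ.1 q) ((hΓ q).1 p),
    fun x => ?_, fun y => ?_⟩
  · simp only [_root_.mix]
    rw [Finset.sum_comm]
    simp only [← Finset.mul_sum, fun q => (hΓ q).2.1 x]
    rw [hξ.sum_mul_fst (P · x), hμ x]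
  · simp only [_root_.mix]
    rw [Finset.sum_comm]
    simp only [← Finset.mul_sum, fun q => (hΓ q).2.2 y]
    rw [hξ.sum_mul_snd (Q · y), hν y]

theorem isCoupling_mul {μ ν : Ω → ℝ} (hμ : IsProbMeasure μ) (hν : IsProbMeasure ν) :
    IsCoupling (fun p => μ p.1 * ν p.2) μ ν :=
  ⟨fun p => mul_nonneg (hμ.1 _) (hν.1 _),
    fun x => by dsimp only; rw [← Finset.mul_sum, hν.2, mul_one],
    fun y => by dsimp only; rw [← Finset.sum_mul, hμ.2, one_mul]⟩

end Coupling

theorem ciInf_le_div_one_sub_of_forall_exists_le {ι : Type*} [Nonempty ι] {f : ι → ℝ}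
    (hf : BddBelow (Set.range f)) {κ C : ℝ} (hκ0 : 0 ≤ κ) (hκ1 : κ < 1)
    (h : ∀ i, ∃ j, f j ≤ κ * f i + C) : ⨅ i, f i ≤ C / (1 - κ) := by
  have key : (⨅ i, f i) - C ≤ κ * ⨅ i, f i := by
    rw [Real.mul_iInf_of_nonneg hκ0]
    refine le_ciInf fun i => ?_
    obtain ⟨j, hj⟩ := h i
    linarith [ciInf_le hf j]
  rw [le_div_iff₀ (by linarith)]
  linarith

section LipConst

variable {Ω : Type*} [MetricSpace Ω]

theorem lipConst_nonneg (h : Ω → ℝ) : 0 ≤ lipConst h := by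
  rcases subsingleton_or_nontrivial Ω with hΩ | hΩ
  · have : {L : ℝ | ∀ σ τ : Ω, |h σ - h τ| ≤ L * dist σ τ} = Set.univ :=
      Set.eq_univ_of_forall fun L σ τ => by simp [Subsingleton.elim σ τ]
    rw [lipConst, this, Real.sInf_univ]
  · obtain ⟨a, b, hab⟩ := exists_pair_ne Ω
    refine Real.sInf_nonneg fun L hL => nonneg_of_mul_nonneg_left ?_ (dist_pos.mpr hab)
    exact (abs_nonneg _).trans (hL a b)

theorem abs_sub_le_lipConst_mul_dist [Fintype Ω] (h : Ω → ℝ) (σ τ : Ω) :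
    |h σ - h τ| ≤ lipConst h * dist σ τ := by
  rcases eq_or_ne σ τ with rfl | hne
  · simp
  have hd : 0 < dist σ τ := dist_pos.mpr hne
  -- the sum of all difference quotients is a Lipschitz constant (`x / 0 = 0` on the diagonal)
  have hS : {L : ℝ | ∀ σ τ : Ω, |h σ - h τ| ≤ L * dist σ τ}.Nonempty := by
    refine ⟨∑ p : Ω × Ω, |h p.1 - h p.2| / dist p.1 p.2, fun x y => ?_⟩
    rcases eq_or_ne x y with rfl | hxy
    · simp
    rw [← div_le_iff₀ (dist_pos.mpr hxy)]
    exact Finset.single_le_sum (f := fun p : Ω × Ω => |h p.1 - h p.2| / dist p.1 p.2)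
      (fun p _ => div_nonneg (abs_nonneg _) dist_nonneg) (Finset.mem_univ (x, y))
  rw [← div_le_iff₀ hd]
  exact le_csInf hS fun L hL => (div_le_iff₀ hd).mpr (hL σ τ)

end LipConst

section Metric

variable {Ω : Type*} [Fintype Ω] [MetricSpace Ω]

def couplingCost (ξ : Ω × Ω → ℝ) : ℝ := ∑ p, ξ p * dist p.1 p.2

theorem couplingCost_nonneg {ξ : Ω × Ω → ℝ} (hξ : ∀ p, 0 ≤ ξ p) : 0 ≤ couplingCost ξ :=
  Finset.sum_nonneg fun p _ => mul_nonneg (hξ p) dist_nonneg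

theorem couplingCost_glue_le {a b c : Ω → ℝ} {α β : Ω × Ω → ℝ}
    (hα : IsCoupling α a b) (hβ : IsCoupling β b c) :
    couplingCost (glue b α β) ≤ couplingCost α + couplingCost β := by
  set t : Ω → Ω → Ω → ℝ := fun x y z => α (x, y) * β (y, z) / b y
  have ht : ∀ x y z, 0 ≤ t x y z := fun x y z => div_nonneg (mul_nonneg (hα.1 _) (hβ.1 _))
    (hβ.2.1 y ▸ Finset.sum_nonneg fun z _ => hβ.1 (y, z))
  calc couplingCost (glue b α β)
      = ∑ x, ∑ z, ∑ y, t x y z * dist x z := by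
        simp only [couplingCost, Fintype.sum_prod_type, _root_.glue, Finset.sum_mul, t]
    _ ≤ ∑ x, ∑ z, ∑ y, t x y z * (dist x y + dist y z) := by
        gcongr with x _ z _ y _
        · exact ht x y z
        · exact dist_triangle x y z
    _ = ∑ x, ∑ y, (∑ z, t x y z) * dist x y + ∑ z, ∑ y, (∑ x, t x y z) * dist y z := by
        simp only [mul_add, Finset.sum_add_distrib, Finset.sum_mul]
        congr 1
        · exact Finset.sum_congr rfl fun x _ => Finset.sum_comm
        · rw [Finset.sum_comm]
          exact Finset.sum_congr rfl fun z _ => Finset.sum_comm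
    _ = couplingCost α + couplingCost β := by
        simp only [t, sum_snd_glue_summand hα hβ, sum_fst_glue_summand hα hβ, couplingCost,
          Fintype.sum_prod_type]
        congr 1
        exact Finset.sum_comm

theorem couplingCost_mix (ξ : Ω × Ω → ℝ) (Γ : Ω × Ω → Ω × Ω → ℝ) :
    couplingCost (mix ξ Γ) = ∑ q, ξ q * couplingCost (Γ q) := by
  simp only [couplingCost, mix, Finset.sum_mul, Finset.mul_sum, mul_assoc]
  exact Finset.sum_comm

theorem exists_isCoupling_couplingCost_le {P Q : Ω → Ω → ℝ} {μ ν : Ω → ℝ} {κ : ℝ}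
    (hμ : IsStationaryDist P μ) (hν : IsStationaryDist Q ν)
    (hcontr : ∀ σ τ : Ω, ∃ γ : Ω × Ω → ℝ, IsCoupling γ (P σ) (P τ) ∧
      couplingCost γ ≤ κ * dist σ τ)
    {γ : Ω → Ω × Ω → ℝ} (hγ : ∀ σ, IsCoupling (γ σ) (P σ) (Q σ))
    {ξ : Ω × Ω → ℝ} (hξ : IsCoupling ξ μ ν) :
    ∃ ξ', IsCoupling ξ' μ ν ∧
      couplingCost ξ' ≤ κ * couplingCost ξ + ∑ σ, ν σ * couplingCost (γ σ) := by
  choose α hα hαcost using hcontr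
  set Γ : Ω × Ω → Ω × Ω → ℝ := fun q => glue (P q.2) (α q.1 q.2) (γ q.2)
  refine ⟨mix ξ Γ, hξ.mix hμ hν fun q => (hα q.1 q.2).glue (hγ q.2), ?_⟩
  calc couplingCost (mix ξ Γ)
      = ∑ q, ξ q * couplingCost (Γ q) := couplingCost_mix ξ Γ
    _ ≤ ∑ q, ξ q * (κ * dist q.1 q.2 + couplingCost (γ q.2)) := by
        gcongr with q
        · exact hξ.1 q
        · exact (couplingCost_glue_le (hα q.1 q.2) (hγ q.2)).trans
            (add_le_add_left (hαcost q.1 q.2) _)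
    _ = κ * couplingCost ξ + ∑ σ, ν σ * couplingCost (γ σ) := by
        rw [← hξ.sum_mul_snd fun τ => couplingCost (γ τ), couplingCost, Finset.mul_sum,
          ← Finset.sum_add_distrib]
        exact Finset.sum_congr rfl fun q _ => by ring

/-- The Wasserstein distance; junk value `0` when `μ` and `ν` admit no coupling. -/
def wassersteinDist (μ ν : Ω → ℝ) : ℝ := ⨅ ξ : {ξ // IsCoupling ξ μ ν}, couplingCost ξ.1

theorem bddBelow_range_couplingCost (μ ν : Ω → ℝ) :
    BddBelow (Set.range fun ξ : {ξ // IsCoupling ξ μ ν} => couplingCost ξ.1) :=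
  ⟨0, by rintro _ ⟨ξ, rfl⟩; exact couplingCost_nonneg ξ.2.1⟩

theorem wassersteinDist_le_div_one_sub {P Q : Ω → Ω → ℝ} {μ ν : Ω → ℝ} {κ : ℝ}
    (hμ : IsProbMeasure μ) (hν : IsProbMeasure ν)
    (hstatP : IsStationaryDist P μ) (hstatQ : IsStationaryDist Q ν) (hκ0 : 0 ≤ κ) (hκ1 : κ < 1)
    (hcontr : ∀ σ τ : Ω, ∃ γ : Ω × Ω → ℝ, IsCoupling γ (P σ) (P τ) ∧
      couplingCost γ ≤ κ * dist σ τ)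
    {γ : Ω → Ω × Ω → ℝ} (hγ : ∀ σ, IsCoupling (γ σ) (P σ) (Q σ)) :
    wassersteinDist μ ν ≤ (∑ σ, ν σ * couplingCost (γ σ)) / (1 - κ) := by
  have : Nonempty {ξ // IsCoupling ξ μ ν} := ⟨⟨_, isCoupling_mul hμ hν⟩⟩
  refine ciInf_le_div_one_sub_of_forall_exists_le (bddBelow_range_couplingCost μ ν) hκ0 hκ1
    fun ξ => ?_
  obtain ⟨ξ', hξ', hcost⟩ := exists_isCoupling_couplingCost_le hstatP hstatQ hcontr hγ ξ.2
  exact ⟨⟨ξ', hξ'⟩, hcost⟩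

theorem abs_sub_le_lipConst_mul_wassersteinDist {μ ν : Ω → ℝ}
    (hμ : IsProbMeasure μ) (hν : IsProbMeasure ν) (h : Ω → ℝ) :
    |(∑ σ, μ σ * h σ) - ∑ σ, ν σ * h σ| ≤ lipConst h * wassersteinDist μ ν := by
  have : Nonempty {ξ // IsCoupling ξ μ ν} := ⟨⟨_, isCoupling_mul hμ hν⟩⟩
  rw [wassersteinDist, Real.mul_iInf_of_nonneg (lipConst_nonneg h)]
  refine le_ciInf fun ⟨ξ, hξ⟩ => ?_
  calc |(∑ σ, μ σ * h σ) - ∑ σ, ν σ * h σ|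
      = |∑ p, ξ p * (h p.1 - h p.2)| := by
        simp only [mul_sub, Finset.sum_sub_distrib, hξ.sum_mul_fst, hξ.sum_mul_snd]
    _ ≤ ∑ p, ξ p * (lipConst h * dist p.1 p.2) := by
        refine (Finset.abs_sum_le_sum_abs _ _).trans (Finset.sum_le_sum fun p _ => ?_)
        rw [abs_mul, abs_of_nonneg (hξ.1 p)]
        exact mul_le_mul_of_nonneg_left (abs_sub_le_lipConst_mul_dist h p.1 p.2) (hξ.1 p)
    _ = lipConst h * couplingCost ξ := by
        simp only [couplingCost, Finset.mul_sum]
        exact Finset.sum_congr rfl fun p _ => by ring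

end Metric

variable {Ω : Type*} [Fintype Ω] [MetricSpace Ω]

theorem stmt0_general (P Q : Ω → Ω → ℝ) (μ ν : Ω → ℝ) (κ : ℝ)
    (hμ : IsProbMeasure μ) (hν : IsProbMeasure ν)
    (hstatP : IsStationaryDist P μ) (hstatQ : IsStationaryDist Q ν)
    (hκ0 : 0 ≤ κ) (hκ1 : κ < 1)
    (hcontr : ∀ σ τ : Ω, ∃ γ : Ω × Ω → ℝ, IsCoupling γ (P σ) (P τ) ∧
      ∑ p : Ω × Ω, γ p * dist p.1 p.2 ≤ κ * dist σ τ)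
    (h : Ω → ℝ) (γ : Ω → Ω × Ω → ℝ)
    (hγ : ∀ σ, IsCoupling (γ σ) (P σ) (Q σ)) :
    |(∑ σ, μ σ * h σ) - ∑ σ, ν σ * h σ| ≤
      lipConst h / (1 - κ) * ∑ σ, ν σ * ∑ p : Ω × Ω, γ σ p * dist p.1 p.2 := by
  calc |(∑ σ, μ σ * h σ) - ∑ σ, ν σ * h σ|
      ≤ lipConst h * wassersteinDist μ ν := abs_sub_le_lipConst_mul_wassersteinDist hμ hν h
    _ ≤ lipConst h * ((∑ σ, ν σ * couplingCost (γ σ)) / (1 - κ)) :=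
        mul_le_mul_of_nonneg_left
          (wassersteinDist_le_div_one_sub hμ hν hstatP hstatQ hκ0 hκ1 hcontr hγ)
          (lipConst_nonneg h)
    _ = _ := by unfold couplingCost; ring

theorem stmt0 (P Q : Ω → Ω → ℝ) (μ ν : Ω → ℝ) (κ : ℝ)
    (hP : IsKernel P) (hQ : IsKernel Q)
    (hμ : IsProbMeasure μ) (hν : IsProbMeasure ν)
    (hstatP : IsStationaryDist P μ) (hstatQ : IsStationaryDist Q ν)
    (hκ0 : 0 ≤ κ) (hκ1 : κ < 1)
    (hcontr : ∀ σ τ : Ω, ∃ γ : Ω × Ω → ℝ, IsCoupling γ (P σ) (P τ) ∧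
      ∑ p : Ω × Ω, γ p * dist p.1 p.2 ≤ κ * dist σ τ)
    (h : Ω → ℝ) (γ : Ω → Ω × Ω → ℝ)
    (hγ : ∀ σ, IsCoupling (γ σ) (P σ) (Q σ)) :
    |(∑ σ, μ σ * h σ) - ∑ σ, ν σ * h σ| ≤
      lipConst h / (1 - κ) * ∑ σ, ν σ * ∑ p : Ω × Ω, γ σ p * dist p.1 p.2 :=
  stmt0_general P Q μ ν κ hμ hν hstatP hstatQ hκ0 hκ1 hcontr h γ hγ
end
end

section
/- Let q ≥ 3, β > 0, j ∈ [q] and s* ∈ (0,1). Let x ∈ ℝ^q be the vector with coordinate s* in position j and (1−s*)/(q−1) in every other position, and assume g_β(x) = x. Set a := 2βq·s*(1−s*)/(q−1), a' := 2β(1−s*)/(q−1), and b := 2β·((1−s*)/(q−1))·(s* − (1−s*)/(q−1)). Then for all s₁, s₂ in the probability simplex 𝒮: ∇g_β^{(j)}(x)·(s₁ − s₂)ᵀ = a·(s₁^{(j)} − s₂^{(j)}), and for every k ≠ j, ∇g_β^{(k)}(x)·(s₁ − s₂)ᵀ = a'·(s₁^{(k)} − s₂^{(k)}) − b·(s₁^{(j)}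 − s₂^{(j)}). -/
/-!
The softmax map has directional derivative `∂g_k · v = 2β g_k (v_k - ⟨g, v⟩)`. At the fixed
point `g_β(x) = x`, and a difference of two points of the simplex sums to zero, so the constant
part `(1-s*)/(q-1)` of `x` drops out of `⟨x, v⟩`, leaving `(s* - (1-s*)/(q-1)) v_j`.
-/

noncomputable section
attribute [local instance] Classical.propDecidable

open Finset

/-- The softmax map `g_β : ℝ^q → ℝ^q`, `g_β^{(k)}(s) = e^{2βs_k}/∑_j e^{2βs_j}`. -/
def gbeta (q : ℕ) (β : ℝ) (s : Fin q → ℝ) (k : Fin q) : ℝ :=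
  Real.exp (2 * β * s k) / ∑ j : Fin q, Real.exp (2 * β * s j)

/-- The probability simplex `𝒮` in `ℝ^q`. -/
def simplex (q : ℕ) : Set (Fin q → ℝ) := {x | (∀ k, 0 ≤ x k) ∧ ∑ k, x k = 1}

/-- The vector with value `s` in position `j` and `(1-s)/(q-1)` elsewhere. -/
def spikeVec (q : ℕ) (j : Fin q) (s : ℝ) : Fin q → ℝ :=
  fun k => if k = j then s else (1 - s) / ((q : ℝ) - 1)

/-- The constant `a = 2βq·s*(1-s*)/(q-1)`. -/
def aC (q : ℕ) (β s : ℝ) : ℝ := 2 * β * q * s * (1 - s) / ((q : ℝ) - 1)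

/-- The constant `a' = 2β(1-s*)/(q-1)`. -/
def aC' (q : ℕ) (β s : ℝ) : ℝ := 2 * β * (1 - s) / ((q : ℝ) - 1)

/-- The constant `b = 2β·((1-s*)/(q-1))·(s* - (1-s*)/(q-1))`. -/
def bC (q : ℕ) (β s : ℝ) : ℝ :=
  2 * β * ((1 - s) / ((q : ℝ) - 1)) * (s - (1 - s) / ((q : ℝ) - 1))

lemma hasFDerivAt_exp_mul_apply {ι : Type*} [Fintype ι] (c : ℝ) (x : ι → ℝ) (m : ι) :
    HasFDerivAt (fun t : ι → ℝ => Real.exp (c * t m))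
      ((Real.exp (c * x m) * c) • ContinuousLinearMap.proj (R := ℝ) (φ := fun _ : ι => ℝ) m) x := by
  simpa [smul_smul, mul_comm] using ((hasFDerivAt_apply m x).const_mul c).exp

lemma fderiv_gbeta_apply (q : ℕ) (β : ℝ) (x v : Fin q → ℝ) (k : Fin q) :
    fderiv ℝ (fun t => gbeta q β t k) x v =
      2 * β * gbeta q β x k * (v k - ∑ m, gbeta q β x m * v m) := by
  have hS : ∑ m, Real.exp (2 * β * x m) ≠ 0 :=
    (Finset.sum_pos (fun m _ => Real.exp_pos _) ⟨k, Finset.mem_univ k⟩).ne'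
  have hsum := HasFDerivAt.fun_sum (u := univ) fun m _ => hasFDerivAt_exp_mul_apply (2 * β) x m
  have hinv := (hasDerivAt_inv hS).comp_hasFDerivAt x hsum
  rw [HasFDerivAt.fderiv (f := fun t => gbeta q β t k)
    ((hasFDerivAt_exp_mul_apply (2 * β) x k).mul hinv)]
  simp only [gbeta, add_apply, smul_apply, _root_.sum_apply, ContinuousLinearMap.proj_apply,
    smul_eq_mul]
  generalize ∑ m, Real.exp (2 * β * x m) = S at hS ⊢
  simp only [div_eq_mul_inv, mul_right_comm _ (2 * β), mul_right_comm _ S⁻¹, ← Finset.sum_mul]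
  field_simp
  ring

lemma sum_sub_eq_zero_of_mem_simplex {q : ℕ} {s₁ s₂ : Fin q → ℝ} (hs₁ : s₁ ∈ simplex q)
    (hs₂ : s₂ ∈ simplex q) : ∑ m, (s₁ - s₂) m = 0 := by
  simp [Finset.sum_sub_distrib, hs₁.2, hs₂.2]

lemma sum_spikeVec_mul_of_sum_eq_zero (q : ℕ) (j : Fin q) (s : ℝ) {v : Fin q → ℝ}
    (hv : ∑ m, v m = 0) :
    ∑ m, spikeVec q j s m * v m = (s - (1 - s) / ((q : ℝ) - 1)) * v j := by
  set r := (1 - s) / ((q : ℝ) - 1)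
  have hsplit : ∀ m, spikeVec q j s m * v m = r * v m + if m = j then (s - r) * v j else 0 := by
    intro m
    by_cases h : m = j
    · simp only [spikeVec, h, if_true]
      ring
    · simp [spikeVec, h, r]
  simp [hsplit, Finset.sum_add_distrib, ← Finset.mul_sum, hv]

theorem stmt11_general (q : ℕ) (hq : 3 ≤ q) (β : ℝ) (j : Fin q)
    (s : ℝ)
    (hfix : ∀ k : Fin q, gbeta q β (spikeVec q j s) k = spikeVec q j s k)
    (s₁ s₂ : Fin q → ℝ) (hs₁ : s₁ ∈ simplex q) (hs₂ : s₂ ∈ simplex q) :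
    fderiv ℝ (fun t : Fin q → ℝ => gbeta q β t j) (spikeVec q j s) (s₁ - s₂) =
        aC q β s * (s₁ j - s₂ j) ∧
      ∀ k : Fin q, k ≠ j →
        fderiv ℝ (fun t : Fin q → ℝ => gbeta q β t k) (spikeVec q j s) (s₁ - s₂) =
          aC' q β s * (s₁ k - s₂ k) - bC q β s * (s₁ j - s₂ j) := by
  have hg : gbeta q β (spikeVec q j s) = spikeVec q j s := funext hfix
  have hmean := sum_spikeVec_mul_of_sum_eq_zero q j s (sum_sub_eq_zero_of_mem_simplex hs₁ hs₂)
  refine ⟨?_, fun k hk => ?_⟩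
  · have hq1 : (q : ℝ) - 1 ≠ 0 := by
      have : (3 : ℝ) ≤ q := by exact_mod_cast hq
      linarith
    rw [fderiv_gbeta_apply, hg, hmean]
    simp only [spikeVec, if_pos, Pi.sub_apply, aC]
    field_simp
    ring
  · rw [fderiv_gbeta_apply, hg, hmean]
    simp only [spikeVec, if_neg hk, Pi.sub_apply, aC', bC]
    ring

theorem stmt11 (q : ℕ) (hq : 3 ≤ q) (β : ℝ) (hβ : 0 < β) (j : Fin q)
    (s : ℝ) (hs0 : 0 < s) (hs1 : s < 1)
    (hfix : ∀ k : Fin q, gbeta q β (spikeVec q j s) k = spikeVec q j s k)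
    (s₁ s₂ : Fin q → ℝ) (hs₁ : s₁ ∈ simplex q) (hs₂ : s₂ ∈ simplex q) :
    fderiv ℝ (fun t : Fin q → ℝ => gbeta q β t j) (spikeVec q j s) (s₁ - s₂) =
        aC q β s * (s₁ j - s₂ j) ∧
      ∀ k : Fin q, k ≠ j →
        fderiv ℝ (fun t : Fin q → ℝ => gbeta q β t k) (spikeVec q j s) (s₁ - s₂) =
          aC' q β s * (s₁ k - s₂ k) - bC q β s * (s₁ j - s₂ j) :=
  stmt11_general q hq β j s hfix s₁ s₂ hs₁ hs₂
end
end

section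
/- Let q ≥ 3 and β > 0. Let x ∈ 𝒮 be either ê := (1/q,…,1/q), in which case set θ := 2β/q, or, for some j ∈ [q] and s* ∈ [1/q, 1), the vector with coordinate s* in position j and (1−s*)/(q−1) in every other position satisfying g_β(x) = x, in which case set θ := 2βq·s*(1−s*)/(q−1). Then there exists a constant C > 0, depending only on β and q, such that for every r > 0 and all s₁, s₂ ∈ 𝒮 with ‖s₁ − x‖₂ ≤ r and ‖s₂ − x‖₂ ≤ r, one has ‖g_β(s₁) − g_β(s₂)‖₁ ≤ (θ + C·r)·‖s₁ − s₂‖₁. -/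
noncomputable section
attribute [local instance] Classical.propDecidable

open Finset

/-- The Euclidean (`ℓ₂`) norm on `ℝ^q`. -/
def l2normF {q : ℕ} (v : Fin q → ℝ) : ℝ := Real.sqrt (∑ k, (v k) ^ 2)

/-- The `ℓ₁` norm on `ℝ^q`. -/
def l1normF {q : ℕ} (v : Fin q → ℝ) : ℝ := ∑ k, |v k|

/-! At a point `y` of the segment from `s₂` to `s₁`, with `p = g_β(y)`, the derivative of `g_β`
in the direction `v = s₁ - s₂` is `2β p_k (v_k - ⟨p, v⟩)`, whose `ℓ₁` norm is `2β` times the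
mean absolute deviation `E_p |v - E_p v|`. At the fixed point `x` this deviation is at most
`θ/(2β) ‖v‖₁` whenever `∑ v = 0`, and replacing `x` by `p` changes it by at most
`3 ‖p - x‖₁ ‖v‖₁`. Since `g_β` is `4β`-Lipschitz for `‖·‖₁` and fixes `x`,
`‖p - x‖₁ ≤ 4β ‖y - x‖₁ ≤ 4β √q r`, which gives the constant `C = 24 β² √q`. -/

section Simplex

variable {q : ℕ}

lemma sum_exp_pos (hq : 0 < q) (β : ℝ) (s : Fin q → ℝ) :
    0 < ∑ j : Fin q, Real.exp (2 * β * s j) :=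
  have : Nonempty (Fin q) := Fin.pos_iff_nonempty.mp hq
  Finset.sum_pos (fun _ _ => Real.exp_pos _) Finset.univ_nonempty

lemma gbeta_mem_simplex (hq : 0 < q) (β : ℝ) (s : Fin q → ℝ) : gbeta q β s ∈ simplex q := by
  have hS := sum_exp_pos hq β s
  refine ⟨fun k => (div_pos (Real.exp_pos _) hS).le, ?_⟩
  unfold gbeta
  rw [← Finset.sum_div, div_self hS.ne']

lemma abs_le_l1normF (v : Fin q → ℝ) (k : Fin q) : |v k| ≤ l1normF v :=
  Finset.single_le_sum (fun j _ => abs_nonneg (v j)) (Finset.mem_univ k)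

lemma abs_sum_mul_le_l1normF {p : Fin q → ℝ} (hp : p ∈ simplex q) (v : Fin q → ℝ) :
    |∑ j, p j * v j| ≤ l1normF v := by
  calc |∑ j, p j * v j| ≤ ∑ j, p j * |v j| := by
        refine (Finset.abs_sum_le_sum_abs _ _).trans_eq ?_
        simp only [abs_mul, abs_of_nonneg (hp.1 _)]
    _ ≤ ∑ j, p j * l1normF v := by
        gcongr with j
        exacts [hp.1 j, abs_le_l1normF v j]
    _ = l1normF v := by rw [← Finset.sum_mul, hp.2, one_mul]

lemma l1normF_le_sqrt_mul_l2normF (v : Fin q → ℝ) : l1normF v ≤ √q * l2normF v := by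
  rw [l2normF, ← Real.sqrt_mul (Nat.cast_nonneg q)]
  refine (le_abs_self _).trans (Real.abs_le_sqrt ?_)
  simpa [l1normF, sq_abs] using sq_sum_le_card_mul_sum_sq (s := Finset.univ) (f := fun k => |v k|)

end Simplex

def meanAbsDev {q : ℕ} (p v : Fin q → ℝ) : ℝ := ∑ k, p k * |v k - ∑ j, p j * v j|

section MeanAbsDev

variable {q : ℕ}

lemma meanAbsDev_le {p : Fin q → ℝ} (hp : p ∈ simplex q) (v : Fin q → ℝ) :
    meanAbsDev p v ≤ 2 * l1normF v := by
  calc meanAbsDev p v ≤ ∑ k, p k * (2 * l1normF v) := by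
        refine Finset.sum_le_sum fun k _ => mul_le_mul_of_nonneg_left ?_ (hp.1 k)
        linarith [abs_sub (v k) (∑ j, p j * v j), abs_le_l1normF v k,
          abs_sum_mul_le_l1normF hp v]
    _ = 2 * l1normF v := by rw [← Finset.sum_mul, hp.2, one_mul]

lemma meanAbsDev_le_add {p x : Fin q → ℝ} (hp : p ∈ simplex q) (hx : x ∈ simplex q)
    (v : Fin q → ℝ) :
    meanAbsDev p v ≤ meanAbsDev x v + 3 * l1normF (fun k => p k - x k) * l1normF v := by
  set mp := ∑ j, p j * v j
  set mx := ∑ j, x j * v j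
  set δ := l1normF (fun k => p k - x k)
  have hmean : |mp - mx| ≤ δ * l1normF v := by
    calc |mp - mx| = |∑ j, (p j - x j) * v j| := by
          simp only [mp, mx, ← Finset.sum_sub_distrib, sub_mul]
      _ ≤ ∑ j, |p j - x j| * l1normF v := by
          refine (Finset.abs_sum_le_sum_abs _ _).trans (Finset.sum_le_sum fun j _ => ?_)
          rw [abs_mul]
          exact mul_le_mul_of_nonneg_left (abs_le_l1normF v j) (abs_nonneg _)
      _ = δ * l1normF v := by rw [← Finset.sum_mul]; rfl
  have hpoint : ∀ k, p k * |v k - mp| ≤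
      x k * |v k - mx| + |p k - x k| * (2 * l1normF v) + p k * |mp - mx| := by
    intro k
    have hdev : |v k - mx| ≤ 2 * l1normF v := by
      linarith [abs_sub (v k) mx, abs_le_l1normF v k, abs_sum_mul_le_l1normF hx v]
    have hshift : |v k - mp| ≤ |v k - mx| + |mp - mx| := by
      simpa using abs_sub (v k - mx) (mp - mx)
    calc p k * |v k - mp| ≤ p k * (|v k - mx| + |mp - mx|) :=
          mul_le_mul_of_nonneg_left hshift (hp.1 k)
      _ = x k * |v k - mx| + (p k - x k) * |v k - mx| + p k * |mp - mx| := by ring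
      _ ≤ _ := by
          have := (mul_le_mul_of_nonneg_right (le_abs_self (p k - x k)) (abs_nonneg _)).trans
            (mul_le_mul_of_nonneg_left hdev (abs_nonneg (p k - x k)))
          linarith
  calc meanAbsDev p v
      ≤ ∑ k, (x k * |v k - mx| + |p k - x k| * (2 * l1normF v) + p k * |mp - mx|) :=
        Finset.sum_le_sum fun k _ => hpoint k
    _ = meanAbsDev x v + δ * (2 * l1normF v) + |mp - mx| := by
        rw [Finset.sum_add_distrib, Finset.sum_add_distrib, ← Finset.sum_mul, ← Finset.sum_mul,
          hp.2, one_mul]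
        rfl
    _ ≤ meanAbsDev x v + 3 * δ * l1normF v := by linarith

lemma meanAbsDev_uniform {v : Fin q → ℝ} (hv : ∑ k, v k = 0) :
    meanAbsDev (fun _ => 1 / (q : ℝ)) v = 1 / q * l1normF v := by
  simp [meanAbsDev, l1normF, ← Finset.mul_sum, hv]

end MeanAbsDev

section Spike

variable {q : ℕ} (j : Fin q) (s : ℝ)

lemma sum_spikeVec_mul (f : Fin q → ℝ) :
    ∑ k, spikeVec q j s k * f k =
      s * f j + (1 - s) / ((q : ℝ) - 1) * ∑ k ∈ univ.erase j, f k := by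
  rw [← Finset.add_sum_erase _ _ (Finset.mem_univ j), Finset.mul_sum]
  congr 1
  · simp [spikeVec]
  · exact Finset.sum_congr rfl fun k hk => by simp [spikeVec, Finset.ne_of_mem_erase hk]

lemma meanAbsDev_spikeVec_le (hq : 1 < q) (hs₁ : 1 / (q : ℝ) ≤ s) (hs₂ : s ≤ 1)
    {v : Fin q → ℝ} (hv : ∑ k, v k = 0) :
    meanAbsDev (spikeVec q j s) v ≤ q * s * (1 - s) / ((q : ℝ) - 1) * l1normF v := by
  have hq1 : (0 : ℝ) < q - 1 := by
    have : (1 : ℝ) < q := by exact_mod_cast hq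
    linarith
  set u := (1 - s) / ((q : ℝ) - 1) with hu_def
  have hu : ((q : ℝ) - 1) * u = 1 - s := by rw [hu_def]; field_simp
  have hu0 : 0 ≤ u := div_nonneg (by linarith) hq1.le
  have hsu : 0 ≤ s - u := by
    have : 1 ≤ (q : ℝ) * s := by
      rwa [div_le_iff₀ (by linarith), mul_comm] at hs₁
    nlinarith
  have hrest : ∑ k ∈ univ.erase j, v k = -v j := by
    linarith [Finset.add_sum_erase univ v (Finset.mem_univ j)]
  have hmean : ∑ k, spikeVec q j s k * v k = (s - u) * v j := by
    rw [sum_spikeVec_mul, hrest]; ring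
  set T := ∑ k ∈ univ.erase j, |v k|
  have hAT : |v j| ≤ T := by
    rw [← abs_neg, ← hrest]
    exact Finset.abs_sum_le_sum_abs _ _
  have hl1 : l1normF v = |v j| + T := (Finset.add_sum_erase _ _ (Finset.mem_univ j)).symm
  have hcard : ((univ.erase j).card : ℝ) = q - 1 := by
    rw [Finset.card_erase_of_mem (Finset.mem_univ j), Finset.card_univ, Fintype.card_fin,
      Nat.cast_sub hq.le, Nat.cast_one]
  have hrestDev : u * ∑ k ∈ univ.erase j, |v k - (s - u) * v j| ≤
      u * T + (1 - s) * (s - u) * |v j| := by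
    calc u * ∑ k ∈ univ.erase j, |v k - (s - u) * v j|
        ≤ u * ∑ k ∈ univ.erase j, (|v k| + (s - u) * |v j|) := by
          gcongr with k
          simpa [abs_mul, abs_of_nonneg hsu] using abs_sub (v k) ((s - u) * v j)
      _ = u * T + (1 - s) * (s - u) * |v j| := by
          rw [Finset.sum_add_distrib, Finset.sum_const, nsmul_eq_mul, hcard]
          linear_combination (s - u) * |v j| * hu
  have hj : |v j - (s - u) * v j| = (1 - s + u) * |v j| := by
    rw [show v j - (s - u) * v j = (1 - s + u) * v j by ring, abs_mul,
      abs_of_nonneg (by linarith)]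
  have hθ : (q : ℝ) * s * (1 - s) / ((q : ℝ) - 1) = u + (1 - s) * (s - u) := by
    rw [hu_def]; field_simp; ring
  rw [meanAbsDev, hmean, sum_spikeVec_mul, hj, hθ, hl1]
  nlinarith [mul_nonneg (mul_nonneg (sub_nonneg.2 hs₂) hsu) (sub_nonneg.2 hAT)]

end Spike

lemma sum_abs_sub_le_of_hasDerivAt {ι : Type*} [Fintype ι] {f f' : ℝ → ι → ℝ} {K : ℝ}
    (hf : ∀ t k, HasDerivAt (fun t => f t k) (f' t k) t)
    (hK : ∀ t ∈ Set.Ico (0 : ℝ) 1, ∑ k, |f' t k| ≤ K) :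
    ∑ k, |f 1 k - f 0 k| ≤ K := by
  -- pair `f` with the sign pattern of `f 1 - f 0` to reduce to a real-valued function
  set ε : ι → ℝ := fun k => SignType.sign (f 1 k - f 0 k)
  have hε : ∀ k, |ε k| ≤ 1 := fun k => by
    rcases lt_trichotomy (f 1 k - f 0 k) 0 with h | h | h <;> simp [ε, h]
  have hderiv : ∀ t, HasDerivAt (fun t => ∑ k, ε k * f t k) (∑ k, ε k * f' t k) t :=
    fun t => HasDerivAt.fun_sum fun k _ => (hf t k).const_mul (ε k)
  have hbound : ∀ t ∈ Set.Ico (0 : ℝ) 1, ‖∑ k, ε k * f' t k‖ ≤ K := fun t ht =>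
    calc ‖∑ k, ε k * f' t k‖ ≤ ∑ k, |ε k * f' t k| := Finset.abs_sum_le_sum_abs _ _
      _ ≤ ∑ k, |f' t k| := Finset.sum_le_sum fun k _ => by
          rw [abs_mul]; exact mul_le_of_le_one_left (abs_nonneg _) (hε k)
      _ ≤ K := hK t ht
  have hmvt := norm_image_sub_le_of_norm_deriv_le_segment_01'
    (fun t _ => (hderiv t).hasDerivWithinAt) hbound
  calc ∑ k, |f 1 k - f 0 k| = ∑ k, ε k * f 1 k - ∑ k, ε k * f 0 k := by
        rw [← Finset.sum_sub_distrib]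
        exact Finset.sum_congr rfl fun k _ => by rw [← mul_sub, sign_mul_self]
    _ ≤ K := (le_abs_self _).trans hmvt

section Softmax

variable {q : ℕ} {β : ℝ}

lemma gbeta_const (hq : 0 < q) (a : ℝ) (k : Fin q) : gbeta q β (fun _ => a) k = 1 / q := by
  have : 0 < (q : ℝ) := by exact_mod_cast hq
  simp only [gbeta, Finset.sum_const, Finset.card_univ, Fintype.card_fin, nsmul_eq_mul]
  field_simp

lemma hasDerivAt_gbeta_line (hq : 0 < q) (c v : Fin q → ℝ) (k : Fin q) (t : ℝ) :
    HasDerivAt (fun t => gbeta q β (fun i => c i + t * v i) k)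
      (2 * β * gbeta q β (fun i => c i + t * v i) k *
        (v k - ∑ j, gbeta q β (fun i => c i + t * v i) j * v j)) t := by
  set E : Fin q → ℝ → ℝ := fun j t => Real.exp (2 * β * (c j + t * v j))
  have hE : ∀ j, HasDerivAt (E j) (E j t * (2 * β * v j)) t := fun j => by
    simpa using (((hasDerivAt_id t).mul_const (v j)).const_add (c j)).const_mul (2 * β) |>.exp
  have hZ : 0 < ∑ j, E j t := sum_exp_pos hq β _
  have hg : ∀ j, gbeta q β (fun i => c i + t * v i) j = E j t / ∑ i, E i t := fun j => rfl
  refine ((hE k).div (HasDerivAt.fun_sum fun j _ => hE j) hZ.ne').congr_deriv ?_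
  have hsum : ∑ i, E i t * (2 * β * v i) = 2 * β * ∑ i, E i t * v i := by
    rw [Finset.mul_sum]; exact Finset.sum_congr rfl fun i _ => by ring
  simp only [hg, div_mul_eq_mul_div, ← Finset.sum_div, hsum]
  field_simp

lemma l1normF_gbeta_sub_le_of_meanAbsDev_le (hq : 0 < q) (hβ : 0 ≤ β) {c v : Fin q → ℝ} {K : ℝ}
    (hK : ∀ t ∈ Set.Ico (0 : ℝ) 1,
      2 * β * meanAbsDev (gbeta q β (fun i => c i + t * v i)) v ≤ K) :
    l1normF (fun k => gbeta q β (fun i => c i + v i) k - gbeta q β c k) ≤ K := by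
  have hjac : ∀ t, ∑ k, |2 * β * gbeta q β (fun i => c i + t * v i) k *
      (v k - ∑ j, gbeta q β (fun i => c i + t * v i) j * v j)| =
      2 * β * meanAbsDev (gbeta q β (fun i => c i + t * v i)) v := fun t => by
    rw [meanAbsDev, Finset.mul_sum]
    refine Finset.sum_congr rfl fun k _ => ?_
    rw [abs_mul, abs_mul, abs_of_nonneg (by positivity : (0 : ℝ) ≤ 2 * β),
      abs_of_nonneg ((gbeta_mem_simplex hq β _).1 k), mul_assoc]
  simpa [l1normF] using sum_abs_sub_le_of_hasDerivAt (fun t k => hasDerivAt_gbeta_line hq c v k t)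
    fun t ht => (hjac t).trans_le (hK t ht)

lemma l1normF_gbeta_sub_le (hq : 0 < q) (hβ : 0 ≤ β) (s s' : Fin q → ℝ) :
    l1normF (fun k => gbeta q β s k - gbeta q β s' k) ≤
      4 * β * l1normF (fun k => s k - s' k) := by
  have hK := l1normF_gbeta_sub_le_of_meanAbsDev_le hq hβ (c := s') (v := fun k => s k - s' k)
    (K := 4 * β * l1normF (fun k => s k - s' k)) fun t _ => by
      have := meanAbsDev_le (gbeta_mem_simplex hq β (fun i => s' i + t * (s i - s' i)))
        (fun k => s k - s' k)
      nlinarith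
  simpa using hK

end Softmax

lemma l2normF_eq_norm {q : ℕ} (v : Fin q → ℝ) : l2normF v = ‖WithLp.toLp 2 v‖ := by
  simp [EuclideanSpace.norm_eq, l2normF]

lemma l2normF_segment_sub_le {q : ℕ} {u w x : Fin q → ℝ} {r t : ℝ} (ht₀ : 0 ≤ t) (ht₁ : t ≤ 1)
    (hu : l2normF (fun k => u k - x k) ≤ r) (hw : l2normF (fun k => w k - x k) ≤ r) :
    l2normF (fun k => u k + t * (w k - u k) - x k) ≤ r := by
  rw [l2normF_eq_norm] at hu hw ⊢
  have hsplit : WithLp.toLp 2 (fun k => u k + t * (w k - u k) - x k) =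
      (1 - t) • WithLp.toLp 2 (fun k => u k - x k) + t • WithLp.toLp 2 (fun k => w k - x k) := by
    ext k; simp; ring
  calc ‖WithLp.toLp 2 (fun k => u k + t * (w k - u k) - x k)‖
      ≤ (1 - t) * ‖WithLp.toLp 2 (fun k => u k - x k)‖ +
          t * ‖WithLp.toLp 2 (fun k => w k - x k)‖ := by
        rw [hsplit]
        refine (norm_add_le _ _).trans_eq ?_
        rw [norm_smul, norm_smul, Real.norm_of_nonneg (by linarith), Real.norm_of_nonneg ht₀]
    _ ≤ (1 - t) * r + t * r := by gcongr
    _ = r := by ring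

theorem l1normF_gbeta_sub_le_of_near_fixedPoint {q : ℕ} (hq : 0 < q) {β : ℝ} (hβ : 0 ≤ β)
    {x : Fin q → ℝ} (hfix : ∀ k, gbeta q β x k = x k) {θ : ℝ}
    (hθ : ∀ v : Fin q → ℝ, ∑ k, v k = 0 → 2 * β * meanAbsDev x v ≤ θ * l1normF v)
    {r : ℝ} {s₁ s₂ : Fin q → ℝ} (hs₁ : s₁ ∈ simplex q) (hs₂ : s₂ ∈ simplex q)
    (h₁ : l2normF (fun k => s₁ k - x k) ≤ r) (h₂ : l2normF (fun k => s₂ k - x k) ≤ r) :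
    l1normF (fun k => gbeta q β s₁ k - gbeta q β s₂ k) ≤
      (θ + 24 * β ^ 2 * √q * r) * l1normF (fun k => s₁ k - s₂ k) := by
  set v : Fin q → ℝ := fun k => s₁ k - s₂ k
  have hv : ∑ k, v k = 0 := by simp only [v, Finset.sum_sub_distrib, hs₁.2, hs₂.2, sub_self]
  have hx : x ∈ simplex q := funext hfix ▸ gbeta_mem_simplex hq β x
  have hK := l1normF_gbeta_sub_le_of_meanAbsDev_le hq hβ (c := s₂) (v := v)
    (K := (θ + 24 * β ^ 2 * √q * r) * l1normF v) fun t ht => by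
      set y : Fin q → ℝ := fun i => s₂ i + t * v i
      have hy : l2normF (fun k => y k - x k) ≤ r := l2normF_segment_sub_le ht.1 ht.2.le h₂ h₁
      have hpx : l1normF (fun k => gbeta q β y k - x k) ≤ 4 * β * (√q * r) :=
        calc l1normF (fun k => gbeta q β y k - x k)
            = l1normF (fun k => gbeta q β y k - gbeta q β x k) := by simp only [hfix]
          _ ≤ 4 * β * l1normF (fun k => y k - x k) := l1normF_gbeta_sub_le hq hβ y x
          _ ≤ 4 * β * (√q * r) := by
              gcongr
              exact (l1normF_le_sqrt_mul_l2normF _).trans (by gcongr)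
      have hv0 : 0 ≤ l1normF v := Finset.sum_nonneg fun k _ => abs_nonneg _
      calc 2 * β * meanAbsDev (gbeta q β y) v
          ≤ 2 * β * (meanAbsDev x v +
              3 * l1normF (fun k => gbeta q β y k - x k) * l1normF v) := by
            gcongr
            exact meanAbsDev_le_add (gbeta_mem_simplex hq β y) hx v
        _ ≤ θ * l1normF v + 6 * β * (4 * β * (√q * r)) * l1normF v := by
            nlinarith [hθ v hv, mul_le_mul_of_nonneg_right hpx hv0]
        _ = (θ + 24 * β ^ 2 * √q * r) * l1normF v := by ring
  simpa [v] using hK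

theorem stmt12 (q : ℕ) (hq : 3 ≤ q) (β : ℝ) (hβ : 0 < β)
    (x : Fin q → ℝ) (θ : ℝ)
    (hx : ((x = fun _ => 1 / (q : ℝ)) ∧ θ = 2 * β / q) ∨
      (∃ j : Fin q, ∃ s : ℝ, 1 / (q : ℝ) ≤ s ∧ s < 1 ∧ x = spikeVec q j s ∧
        (∀ k : Fin q, gbeta q β x k = x k) ∧ θ = aC q β s)) :
    ∃ C : ℝ, 0 < C ∧ ∀ r : ℝ, 0 < r →
      ∀ s₁ ∈ simplex q, ∀ s₂ ∈ simplex q,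
        l2normF (fun k => s₁ k - x k) ≤ r →
        l2normF (fun k => s₂ k - x k) ≤ r →
        l1normF (fun k => gbeta q β s₁ k - gbeta q β s₂ k) ≤
          (θ + C * r) * l1normF (fun k => s₁ k - s₂ k) := by
  have hq0 : 0 < q := by omega
  have hfix : ∀ k, gbeta q β x k = x k := by
    rcases hx with ⟨rfl, -⟩ | ⟨-, -, -, -, -, hfix, -⟩
    exacts [gbeta_const hq0 _, hfix]
  have hθ : ∀ v : Fin q → ℝ, ∑ k, v k = 0 → 2 * β * meanAbsDev x v ≤ θ * l1normF v := by
    intro v hv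
    rcases hx with ⟨rfl, rfl⟩ | ⟨j, s, hs₁, hs₂, rfl, -, rfl⟩
    · rw [meanAbsDev_uniform hv]; exact le_of_eq (by ring)
    · calc 2 * β * meanAbsDev (spikeVec q j s) v
          ≤ 2 * β * (q * s * (1 - s) / ((q : ℝ) - 1) * l1normF v) := by
            gcongr
            exact meanAbsDev_spikeVec_le j s (by omega) hs₁ hs₂.le hv
        _ = aC q β s * l1normF v := by rw [aC]; ring
  refine ⟨24 * β ^ 2 * √q, by positivity, fun r _ s₁ hs₁ s₂ hs₂ h₁ h₂ => ?_⟩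
  exact l1normF_gbeta_sub_le_of_near_fixedPoint hq0 hβ.le hfix hθ hs₁ hs₂ h₁ h₂
end
end
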